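/- arXiv:2106.02553 — 2 statements merged into one kernel-verified Lean document; each statement's English description precedes it below -/
import Mathlib

section
/- For a grouped K-armed bandit instance, the Nash program P(θ) has a feasible solution q with s^g(q) > 0 for every group g ∈ 𝒢 if and only if Assumption 1 holds, i.e. if and only if every group g has at least one arm a ∈ 𝒜^g with θ(a) < OPT(g) and |𝒢_a| ≥ 2. In particular, if some group g' violates Assumption 1, then s^{g'}(q) = 0 for every feasible q, so the optimal value of P(θ) is −∞. -/
open scoped Classical
open Finset

noncomputable section

/-- Bernoulli KL divergence `kl(p,q)`. -/
def klB (p q : ℝ) : ℝ :=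
  p * Real.log (p / q) + (1 - p) * Real.log ((1 - p) / (1 - q))

/-- A grouped `K`-armed bandit instance: a finite set of arms `A`, a finite set of groups `G`,
for each group a nonempty set of accessible arms (every arm accessible to some group),
and mean rewards `θ` with values in `(0,1)`. -/
structure GroupedBandit (A G : Type*) [Fintype A] [Fintype G] where
  acc : G → Finset A
  acc_nonempty : ∀ g, (acc g).Nonempty
  acc_cover : ∀ a, ∃ g, a ∈ acc g
  θ : A → ℝ
  θ_mem : ∀ a, θ a ∈ Set.Ioo (0 : ℝ) 1

namespace GroupedBandit

variable {A G : Type*} [Fintype A] [Fintype G] (I : GroupedBandit A G)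

/-- `OPT(g) = max_{a ∈ 𝒜^g} θ(a)`. -/
def OPT (g : G) : ℝ := (I.acc g).sup' (I.acc_nonempty g) I.θ

/-- `Δ^g(a) = OPT(g) − θ(a)`. -/
def Δ (g : G) (a : A) : ℝ := I.OPT g - I.θ a

/-- `𝒢_a = {g : a ∈ 𝒜^g}`. -/
def Ga (a : A) : Finset G := Finset.univ.filter (fun g => a ∈ I.acc g)

lemma Ga_nonempty (a : A) : (I.Ga a).Nonempty := by
  obtain ⟨g, hg⟩ := I.acc_cover a
  exact ⟨g, by simp [Ga, hg]⟩

/-- `𝒜_sub^g = {a ∈ 𝒜^g : θ(a) < OPT(g)}`. -/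
def Asubg (g : G) : Finset A := (I.acc g).filter (fun a => I.θ a < I.OPT g)

/-- `𝒜_sub = {a : a ∈ 𝒜_sub^g for every g ∈ 𝒢_a}`. -/
def Asub : Finset A := Finset.univ.filter (fun a => ∀ g ∈ I.Ga a, a ∈ I.Asubg g)

/-- `J^g(a) = 1 / kl(θ(a), OPT(g))`. -/
def Jg (g : G) (a : A) : ℝ := 1 / klB (I.θ a) (I.OPT g)

/-- `J(a) = max_{g ∈ 𝒢_a} J^g(a)`. -/
def J (a : A) : ℝ := (I.Ga a).sup' (I.Ga_nonempty a) fun g => I.Jg g a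

/-- Feasibility for the Nash program `P(θ)`. -/
def Feasible (q : G → A → ℝ) : Prop :=
  (∀ g a, 0 ≤ q g a) ∧
  (∀ a ∈ I.Asub, ∑ g, q g a = 1) ∧
  (∀ g a, ¬(a ∈ I.Asub ∧ a ∈ I.acc g) → q g a = 0)

/-- `s^g(q)`, the utility gain of group `g` under allocation `q`. -/
def s (q : G → A → ℝ) (g : G) : ℝ :=
  ∑ a ∈ I.Asubg g, I.Δ g a * I.Jg g a
    - ∑ a ∈ I.Asubg g ∩ I.Asub, I.Δ g a * q g a * I.J a

/-- `q` is a maximizer of the Nash program `P(θ)` with value `> −∞`: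
it is feasible, all `s^g(q) > 0`, and it dominates (in Nash social welfare) every feasible
point with finite value. -/
def NashOptimal (q : G → A → ℝ) : Prop :=
  I.Feasible q ∧ (∀ g, 0 < I.s q g) ∧
  ∀ q', I.Feasible q' → (∀ g, 0 < I.s q' g) →
    ∑ g, Real.log (I.s q' g) ≤ ∑ g, Real.log (I.s q g)

/-- Assumption 1: every group has a suboptimal arm shared with another group. -/
def Assumption1 : Prop :=
  ∀ g, ∃ a ∈ I.acc g, I.θ a < I.OPT g ∧ 2 ≤ (I.Ga a).card

/-- Star topology: at least two groups; every arm is either shared by all groups or exclusive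
to one group; there is at least one shared arm; every shared arm is strictly worse than every
group's optimum. -/
def Star : Prop :=
  2 ≤ Fintype.card G ∧
  (∀ a : A, I.Ga a = Finset.univ ∨ (I.Ga a).card = 1) ∧
  (∃ a : A, I.Ga a = Finset.univ) ∧
  (∀ a : A, I.Ga a = Finset.univ → ∀ g : G, I.θ a < I.OPT g)

end GroupedBandit

end


noncomputable section Aux

lemma klB_pos {p q : ℝ} (hp : 0 < p) (hpq : p < q) (hq : q < 1) : 0 < klB p q := by
  have hq0 : 0 < q := hp.trans hpq
  have hp1 : p < 1 := hpq.trans hq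
  have h1 : Real.log (q / p) < q / p - 1 :=
    Real.log_lt_sub_one_of_pos (div_pos hq0 hp) (ne_of_gt ((one_lt_div hp).2 hpq))
  have h2 : Real.log ((1 - q) / (1 - p)) < (1 - q) / (1 - p) - 1 :=
    Real.log_lt_sub_one_of_pos (div_pos (by linarith) (by linarith))
      (ne_of_lt ((div_lt_one (by linarith)).2 (by linarith)))
  rw [Real.log_div hq0.ne' hp.ne'] at h1
  rw [Real.log_div (by linarith : (1:ℝ) - q ≠ 0) (by linarith : (1:ℝ) - p ≠ 0)] at h2
  have e1 : p * (q / p - 1) = q - p := by field_simp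
  have e2 : (1 - p) * ((1 - q) / (1 - p) - 1) = p - q := by
    rw [mul_sub, mul_div_cancel₀ _ (by linarith : (1:ℝ) - p ≠ 0)]; ring
  unfold klB
  rw [Real.log_div hp.ne' hq0.ne',
    Real.log_div (by linarith : (1:ℝ) - p ≠ 0) (by linarith : (1:ℝ) - q ≠ 0)]
  nlinarith [mul_lt_mul_of_pos_left h1 hp,
    mul_lt_mul_of_pos_left h2 (by linarith : (0:ℝ) < 1 - p)]

namespace GroupedBandit

variable {A G : Type*} [Fintype A] [Fintype G] (I : GroupedBandit A G)

lemma mem_Ga {a : A} {g : G} : g ∈ I.Ga a ↔ a ∈ I.acc g := by simp [Ga]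

lemma OPT_lt_one (g : G) : I.OPT g < 1 :=
  (Finset.sup'_lt_iff (I.acc_nonempty g)).2 fun a _ => (I.θ_mem a).2

lemma mem_Asubg {a : A} {g : G} : a ∈ I.Asubg g ↔ a ∈ I.acc g ∧ I.θ a < I.OPT g :=
  Finset.mem_filter

lemma Jg_pos {g : G} {a : A} (h : a ∈ I.Asubg g) : 0 < I.Jg g a :=
  div_pos one_pos (klB_pos (I.θ_mem a).1 (I.mem_Asubg.1 h).2 (I.OPT_lt_one g))

lemma Δ_pos {g : G} {a : A} (h : a ∈ I.Asubg g) : 0 < I.Δ g a :=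
  sub_pos.2 (I.mem_Asubg.1 h).2

lemma mem_Asubg_of_mem_Asub {a : A} {g : G} (ha : a ∈ I.Asub) (hg : g ∈ I.Ga a) :
    a ∈ I.Asubg g := (Finset.mem_filter.1 ha).2 g hg

lemma Jg_le_J {a : A} {g : G} (hg : g ∈ I.Ga a) : I.Jg g a ≤ I.J a := by
  rw [J]; exact Finset.le_sup' (fun g => I.Jg g a) hg

lemma sum_Jg_pos {a : A} (ha : a ∈ I.Asub) : 0 < ∑ g ∈ I.Ga a, I.Jg g a :=
  Finset.sum_pos (fun g hg => I.Jg_pos (I.mem_Asubg_of_mem_Asub ha hg)) (I.Ga_nonempty a)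

lemma J_le_sum {a : A} (ha : a ∈ I.Asub) : I.J a ≤ ∑ g ∈ I.Ga a, I.Jg g a := by
  obtain ⟨g0, hg0, hEq⟩ := Finset.exists_mem_eq_sup' (I.Ga_nonempty a) (fun g => I.Jg g a)
  rw [J, hEq]
  exact Finset.single_le_sum
    (fun g hg => (I.Jg_pos (I.mem_Asubg_of_mem_Asub ha hg)).le) hg0

lemma J_lt_sum {a : A} (ha : a ∈ I.Asub) (hc : 2 ≤ (I.Ga a).card) :
    I.J a < ∑ g ∈ I.Ga a, I.Jg g a := by
  obtain ⟨g0, hg0, hEq⟩ := Finset.exists_mem_eq_sup' (I.Ga_nonempty a) (fun g => I.Jg g a)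
  obtain ⟨g1, hg1, hne⟩ := Finset.exists_mem_ne (show 1 < (I.Ga a).card by omega) g0
  have hsplit : ∑ g ∈ I.Ga a, I.Jg g a
      = I.Jg g0 a + ∑ g ∈ (I.Ga a).erase g0, I.Jg g a :=
    (Finset.add_sum_erase _ _ hg0).symm
  have h1 : I.Jg g1 a ≤ ∑ g ∈ (I.Ga a).erase g0, I.Jg g a :=
    Finset.single_le_sum
      (fun g hg => (I.Jg_pos (I.mem_Asubg_of_mem_Asub ha (Finset.mem_of_mem_erase hg))).le)
      (Finset.mem_erase.2 ⟨hne, hg1⟩)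
  have h2 : 0 < I.Jg g1 a := I.Jg_pos (I.mem_Asubg_of_mem_Asub ha hg1)
  rw [J, hEq, hsplit]
  linarith

/-- The canonical feasible allocation. -/
def qstar : G → A → ℝ := fun g a =>
  if a ∈ I.Asub ∧ a ∈ I.acc g then I.Jg g a / ∑ g' ∈ I.Ga a, I.Jg g' a else 0

lemma qstar_eq {g : G} {a : A} (ha : a ∈ I.Asub) (hg : g ∈ I.Ga a) :
    I.qstar g a = I.Jg g a / ∑ g' ∈ I.Ga a, I.Jg g' a :=
  if_pos ⟨ha, I.mem_Ga.1 hg⟩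

lemma qstar_feasible : I.Feasible I.qstar := by
  refine ⟨?_, ?_, ?_⟩
  · intro g a
    unfold qstar
    split_ifs with h
    · exact le_of_lt (div_pos
        (I.Jg_pos (I.mem_Asubg_of_mem_Asub h.1 (I.mem_Ga.2 h.2)))
        (I.sum_Jg_pos h.1))
    · exact le_refl 0
  · intro a ha
    have hset : Finset.univ.filter (fun g => a ∈ I.Asub ∧ a ∈ I.acc g) = I.Ga a := by
      ext g; simp [Ga, ha]
    have h1 : ∑ g, I.qstar g a = ∑ g ∈ I.Ga a, I.Jg g a / ∑ g' ∈ I.Ga a, I.Jg g' a := by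
      simp only [qstar]
      rw [← Finset.sum_filter, hset]
    rw [h1, ← Finset.sum_div, div_self (I.sum_Jg_pos ha).ne']
  · intro g a h
    exact if_neg h

lemma violator_s_eq_zero (g' : G)
    (hviol : ¬(∃ a ∈ I.acc g', I.θ a < I.OPT g' ∧ 2 ≤ (I.Ga a).card))
    (q : G → A → ℝ) (hq : I.Feasible q) : I.s q g' = 0 := by
  obtain ⟨hnn, hsum, hzero⟩ := hq
  have hGa : ∀ a ∈ I.Asubg g', I.Ga a = {g'} := by
    intro a ha
    obtain ⟨hacc, hlt⟩ := I.mem_Asubg.1 ha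
    have hcard : (I.Ga a).card ≤ 1 := by
      by_contra hc
      exact hviol ⟨a, hacc, hlt, by omega⟩
    have hg' : g' ∈ I.Ga a := I.mem_Ga.2 hacc
    exact Finset.eq_singleton_iff_unique_mem.2
      ⟨hg', fun x hx => Finset.card_le_one.1 hcard x hx g' hg'⟩
  have hsub : ∀ a ∈ I.Asubg g', a ∈ I.Asub := by
    intro a ha
    refine Finset.mem_filter.2 ⟨Finset.mem_univ a, ?_⟩
    intro g hg
    rw [hGa a ha, Finset.mem_singleton] at hg
    rw [hg]; exact ha
  have hinter : I.Asubg g' ∩ I.Asub = I.Asubg g' :=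
    Finset.inter_eq_left.2 hsub
  have hJ : ∀ a ∈ I.Asubg g', I.J a = I.Jg g' a := by
    intro a ha
    refine le_antisymm ?_ (I.Jg_le_J (I.mem_Ga.2 (I.mem_Asubg.1 ha).1))
    refine Finset.sup'_le _ _ (fun g hg => ?_)
    rw [hGa a ha, Finset.mem_singleton] at hg
    rw [hg]
  have hq1 : ∀ a ∈ I.Asubg g', q g' a = 1 := by
    intro a ha
    have h1 : ∑ g, q g a = 1 := hsum a (hsub a ha)
    have h0 : ∀ g, g ≠ g' → q g a = 0 := by
      intro g hg
      apply hzero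
      rintro ⟨-, hacc⟩
      have hmem : g ∈ I.Ga a := I.mem_Ga.2 hacc
      rw [hGa a ha, Finset.mem_singleton] at hmem
      exact hg hmem
    rwa [Fintype.sum_eq_single g' h0] at h1
  rw [s, hinter, sub_eq_zero]
  refine Finset.sum_congr rfl (fun a ha => ?_)
  rw [hq1 a ha, hJ a ha]
  ring

lemma s_qstar_pos (hA1 : I.Assumption1) (g : G) : 0 < I.s I.qstar g := by
  obtain ⟨a0, ha0acc, ha0lt, ha0card⟩ := hA1 g
  have ha0 : a0 ∈ I.Asubg g := I.mem_Asubg.2 ⟨ha0acc, ha0lt⟩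
  have hsplit : I.s I.qstar g
      = (∑ a ∈ I.Asubg g ∩ I.Asub,
          (I.Δ g a * I.Jg g a - I.Δ g a * I.qstar g a * I.J a))
        + ∑ a ∈ I.Asubg g \ I.Asub, I.Δ g a * I.Jg g a := by
    rw [s, Finset.sum_sub_distrib]
    have := Finset.sum_inter_add_sum_sdiff (I.Asubg g) I.Asub
      (fun a => I.Δ g a * I.Jg g a)
    linarith
  have hterm : ∀ a ∈ I.Asubg g ∩ I.Asub,
      0 ≤ I.Δ g a * I.Jg g a - I.Δ g a * I.qstar g a * I.J a := by
    intro a ha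
    obtain ⟨ha1, ha2⟩ := Finset.mem_inter.1 ha
    have hgGa : g ∈ I.Ga a := I.mem_Ga.2 (I.mem_Asubg.1 ha1).1
    have hS : 0 < ∑ g' ∈ I.Ga a, I.Jg g' a := I.sum_Jg_pos ha2
    have hJg : 0 < I.Jg g a := I.Jg_pos ha1
    have hJle : I.J a ≤ ∑ g' ∈ I.Ga a, I.Jg g' a := I.J_le_sum ha2
    have hΔ : 0 < I.Δ g a := I.Δ_pos ha1
    rw [I.qstar_eq ha2 hgGa]
    have h1 : I.Jg g a / (∑ g' ∈ I.Ga a, I.Jg g' a) * I.J a ≤ I.Jg g a := by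
      rw [div_mul_eq_mul_div, div_le_iff₀ hS]
      exact mul_le_mul_of_nonneg_left hJle hJg.le
    nlinarith
  have htermdiff : ∀ a ∈ I.Asubg g \ I.Asub, 0 ≤ I.Δ g a * I.Jg g a := by
    intro a ha
    have ha1 := (Finset.mem_sdiff.1 ha).1
    exact le_of_lt (mul_pos (I.Δ_pos ha1) (I.Jg_pos ha1))
  rw [hsplit]
  by_cases hA : a0 ∈ I.Asub
  · have hmem : a0 ∈ I.Asubg g ∩ I.Asub := Finset.mem_inter.2 ⟨ha0, hA⟩
    have hpos : 0 < I.Δ g a0 * I.Jg g a0 - I.Δ g a0 * I.qstar g a0 * I.J a0 := by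
      have hgGa : g ∈ I.Ga a0 := I.mem_Ga.2 ha0acc
      have hS : 0 < ∑ g' ∈ I.Ga a0, I.Jg g' a0 := I.sum_Jg_pos hA
      have hJg : 0 < I.Jg g a0 := I.Jg_pos ha0
      have hJlt : I.J a0 < ∑ g' ∈ I.Ga a0, I.Jg g' a0 := I.J_lt_sum hA ha0card
      have hΔ : 0 < I.Δ g a0 := I.Δ_pos ha0
      rw [I.qstar_eq hA hgGa]
      have h1 : I.Jg g a0 / (∑ g' ∈ I.Ga a0, I.Jg g' a0) * I.J a0 < I.Jg g a0 := by
        rw [div_mul_eq_mul_div, div_lt_iff₀ hS]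
        exact mul_lt_mul_of_pos_left hJlt hJg
      nlinarith
    have h1 : 0 < ∑ a ∈ I.Asubg g ∩ I.Asub,
        (I.Δ g a * I.Jg g a - I.Δ g a * I.qstar g a * I.J a) :=
      Finset.sum_pos' hterm ⟨a0, hmem, hpos⟩
    have h2 : 0 ≤ ∑ a ∈ I.Asubg g \ I.Asub, I.Δ g a * I.Jg g a :=
      Finset.sum_nonneg htermdiff
    linarith
  · have hmem : a0 ∈ I.Asubg g \ I.Asub := Finset.mem_sdiff.2 ⟨ha0, hA⟩
    have h1 : 0 ≤ ∑ a ∈ I.Asubg g ∩ I.Asub,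
        (I.Δ g a * I.Jg g a - I.Δ g a * I.qstar g a * I.J a) :=
      Finset.sum_nonneg hterm
    have h2 : 0 < ∑ a ∈ I.Asubg g \ I.Asub, I.Δ g a * I.Jg g a :=
      Finset.sum_pos' htermdiff ⟨a0, hmem, mul_pos (I.Δ_pos ha0) (I.Jg_pos ha0)⟩
    linarith

end GroupedBandit

end Aux

/-- The Nash program `P(θ)` of a grouped `K`-armed bandit instance has a
feasible solution with `s^g(q) > 0` for every group `g` if and only if Assumption 1 holds.
In particular, if a group `g'` violates Assumption 1 then `s^{g'}(q) = 0` for every feasible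
`q` (so the optimal value of `P(θ)` is `−∞`). -/
theorem assumption1_iff_positive_gain {A G : Type*} [Fintype A] [Fintype G]
    (I : GroupedBandit A G) (hθ : Function.Injective I.θ) :
    ((∃ q : G → A → ℝ, I.Feasible q ∧ ∀ g, 0 < I.s q g) ↔ I.Assumption1) ∧
    (∀ g' : G, ¬(∃ a ∈ I.acc g', I.θ a < I.OPT g' ∧ 2 ≤ (I.Ga a).card) →
      ∀ q : G → A → ℝ, I.Feasible q → I.s q g' = 0) := by
  constructor
  · constructor
    · rintro ⟨q, hq, hs⟩ g
      by_contra hviol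
      have := I.violator_s_eq_zero g hviol q hq
      have hsg := hs g
      rw [this] at hsg
      exact lt_irrefl 0 hsg
    · intro hA1
      exact ⟨I.qstar, I.qstar_feasible, I.s_qstar_pos hA1⟩
  · intro g' hviol q hq
    exact I.violator_s_eq_zero g' hviol q hq
end

section
/- Consider a grouped K-armed bandit instance and let q* be a maximizer of the Nash program P(θ) with f(q*) > −∞. Let a ∈ 𝒜_sub and let g, h ∈ 𝒢_a be groups with OPT(h) ≤ OPT(g). If q*^g(a) > 0, then s^h(q*) ≤ s^g(q*). -/
open scoped Classical
open Finset

lemma klB_pos' {p q : ℝ} (hp0 : 0 < p) (hp1 : p < 1) (hq0 : 0 < q) (hq1 : q < 1)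
    (hne : p ≠ q) : 0 < klB p q := by
  have h1 : Real.log (q / p) < q / p - 1 :=
    Real.log_lt_sub_one_of_pos (by positivity) (by
      intro hc
      apply hne
      field_simp at hc
      linarith)
  have h2 : Real.log ((1 - q) / (1 - p)) ≤ (1 - q) / (1 - p) - 1 :=
    Real.log_le_sub_one_of_pos (div_pos (by linarith) (by linarith))
  have e1 : Real.log (p / q) = - Real.log (q / p) := by
    rw [← Real.log_inv]; congr 1; field_simp
  have e2 : Real.log ((1 - p) / (1 - q)) = - Real.log ((1 - q) / (1 - p)) := by
    rw [← Real.log_inv]; congr 1; field_simp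
  have hb1 : p * Real.log (q / p) < q - p := by
    have h3 : p * Real.log (q / p) < p * (q / p - 1) := mul_lt_mul_of_pos_left h1 hp0
    rw [mul_sub, mul_div_cancel₀ _ (ne_of_gt hp0)] at h3
    linarith
  have hb2 : (1 - p) * Real.log ((1 - q) / (1 - p)) ≤ p - q := by
    have h1p : (0:ℝ) < 1 - p := by linarith
    have h3 := mul_le_mul_of_nonneg_left h2 (le_of_lt h1p)
    rw [mul_sub, mul_div_cancel₀ _ (ne_of_gt h1p)] at h3
    linarith
  rw [klB, e1, e2]
  nlinarith

/-- If `qstar` maximizes `P(θ)` with finite value, `a ∈ 𝒜_sub`,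
`g, h ∈ 𝒢_a` with `OPT(h) ≤ OPT(g)`, and `qstar^g(a) > 0`, then `s^h(qstar) ≤ s^g(qstar)`. -/
theorem nash_gain_monotone {A G : Type*} [Fintype A] [Fintype G]
    (I : GroupedBandit A G) (hθ : Function.Injective I.θ)
    (qstar : G → A → ℝ) (hq : I.NashOptimal qstar)
    (a : A) (ha : a ∈ I.Asub) (g h : G) (hg : g ∈ I.Ga a) (hh : h ∈ I.Ga a)
    (hOPT : I.OPT h ≤ I.OPT g) (hpos : 0 < qstar g a) :
    I.s qstar h ≤ I.s qstar g := by
  by_contra hcon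
  push_neg at hcon
  have hgh : g ≠ h := by rintro rfl; exact lt_irrefl _ hcon
  have hne_hg : ¬ (h = g) := fun hc => hgh hc.symm
  obtain ⟨⟨hnn, hsum, hzero⟩, hspos, hopt⟩ := hq
  have hag : a ∈ I.acc g := by simpa [GroupedBandit.Ga] using hg
  have hah : a ∈ I.acc h := by simpa [GroupedBandit.Ga] using hh
  have hasub : ∀ g' ∈ I.Ga a, a ∈ I.Asubg g' := by
    have := ha
    simp only [GroupedBandit.Asub, Finset.mem_filter, Finset.mem_univ, true_and] at this
    exact this
  have hθg : I.θ a < I.OPT g := by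
    have := hasub g hg
    simp only [GroupedBandit.Asubg, Finset.mem_filter] at this
    exact this.2
  have hθh : I.θ a < I.OPT h := by
    have := hasub h hh
    simp only [GroupedBandit.Asubg, Finset.mem_filter] at this
    exact this.2
  have hOPTg : I.OPT g ∈ Set.Ioo (0:ℝ) 1 := by
    obtain ⟨b, hb, hOb⟩ := Finset.exists_mem_eq_sup' (I.acc_nonempty g) I.θ
    rw [GroupedBandit.OPT, hOb]; exact I.θ_mem b
  have hθa := I.θ_mem a
  have hklg : 0 < klB (I.θ a) (I.OPT g) :=
    klB_pos' hθa.1 hθa.2 hOPTg.1 hOPTg.2 (ne_of_lt hθg)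
  have hJg : 0 < I.Jg g a := by rw [GroupedBandit.Jg]; positivity
  have hJa : 0 < I.J a := by
    rw [GroupedBandit.J]
    exact lt_of_lt_of_le hJg (Finset.le_sup' (fun g' => I.Jg g' a) hg)
  have hΔg : 0 < I.Δ g a := sub_pos.mpr hθg
  have hΔh : 0 < I.Δ h a := sub_pos.mpr hθh
  have hΔle : I.Δ h a ≤ I.Δ g a := sub_le_sub_right hOPT _
  have hsg : 0 < I.s qstar g := hspos g
  have hsh : 0 < I.s qstar h := hspos h
  set sg := I.s qstar g with hsgdef
  set sh := I.s qstar h with hshdef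
  have hcpos : 0 < I.Δ g a * I.J a := mul_pos hΔg hJa
  have hdpos : 0 < sh - sg := sub_pos.mpr hcon
  set ε := min (qstar g a) ((sh - sg) / (4 * (I.Δ g a * I.J a))) with hε
  have hεpos : 0 < ε := lt_min hpos (by positivity)
  have hεq : ε ≤ qstar g a := min_le_left _ _
  have hδg_le : ε * (I.Δ g a * I.J a) ≤ (sh - sg) / 4 := by
    have h1 : ε ≤ (sh - sg) / (4 * (I.Δ g a * I.J a)) := min_le_right _ _
    have h2 : ε * (I.Δ g a * I.J a) ≤ ((sh - sg) / (4 * (I.Δ g a * I.J a))) * (I.Δ g a * I.J a) :=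
      mul_le_mul_of_nonneg_right h1 hcpos.le
    have h3 : ((sh - sg) / (4 * (I.Δ g a * I.J a))) * (I.Δ g a * I.J a) = (sh - sg) / 4 := by
      field_simp
    linarith
  have hδh_le : ε * (I.Δ h a * I.J a) ≤ ε * (I.Δ g a * I.J a) :=
    mul_le_mul_of_nonneg_left (mul_le_mul_of_nonneg_right hΔle hJa.le) hεpos.le
  have hδg_pos : 0 < ε * (I.Δ g a * I.J a) := mul_pos hεpos hcpos
  have hδh_pos : 0 < ε * (I.Δ h a * I.J a) := mul_pos hεpos (mul_pos hΔh hJa)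
  set δg := ε * (I.Δ g a * I.J a) with hδgdef
  set δh := ε * (I.Δ h a * I.J a) with hδhdef
  set q' : G → A → ℝ := fun g' a' =>
    qstar g' a' + (if g' = g ∧ a' = a then -ε else 0)
      + (if g' = h ∧ a' = a then ε else 0) with hq'def
  -- feasibility of the perturbed allocation
  have hfeas' : I.Feasible q' := by
    refine ⟨?_, ?_, ?_⟩
    · intro g' a'
      by_cases h1 : g' = g ∧ a' = a
      · obtain ⟨rfl, rfl⟩ := h1
        simp only [hq'def, and_self, if_true, hgh, false_and, if_false, add_zero]
        linarith
      · by_cases h2 : g' = h ∧ a' = a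
        · obtain ⟨rfl, rfl⟩ := h2
          simp only [hq'def, and_self, if_true, hne_hg, false_and, if_false, add_zero]
          have := hnn g' a'
          linarith
        · simp only [hq'def, if_neg h1, if_neg h2, add_zero]
          exact hnn g' a'
    · intro a' ha'
      by_cases h1 : a' = a
      · have e1 : (∑ g' : G, if g' = g ∧ a' = a then -ε else 0) = -ε := by
          simp [h1]
        have e2 : (∑ g' : G, if g' = h ∧ a' = a then ε else 0) = ε := by
          simp [h1]
        simp only [hq'def]
        rw [Finset.sum_add_distrib, Finset.sum_add_distrib, hsum a' ha', e1, e2]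
        ring
      · have e1 : ∀ g' : G, ¬ (g' = g ∧ a' = a) := fun g' hc => h1 hc.2
        have e2 : ∀ g' : G, ¬ (g' = h ∧ a' = a) := fun g' hc => h1 hc.2
        simp only [hq'def]
        calc ∑ g' : G, (qstar g' a' + (if g' = g ∧ a' = a then -ε else 0)
              + (if g' = h ∧ a' = a then ε else 0))
            = ∑ g' : G, qstar g' a' := by
              refine Finset.sum_congr rfl fun g' _ => ?_
              rw [if_neg (e1 g'), if_neg (e2 g')]; ring
          _ = 1 := hsum a' ha'
    · intro g' a' hcond
      have h0 := hzero g' a' hcond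
      have h1 : ¬ (g' = g ∧ a' = a) := by rintro ⟨rfl, rfl⟩; exact hcond ⟨ha, hag⟩
      have h2 : ¬ (g' = h ∧ a' = a) := by rintro ⟨rfl, rfl⟩; exact hcond ⟨ha, hah⟩
      simp only [hq'def, h0, if_neg h1, if_neg h2, add_zero]
  -- how the gains change
  have haSg : a ∈ I.Asubg g ∩ I.Asub := Finset.mem_inter.mpr ⟨hasub g hg, ha⟩
  have haSh : a ∈ I.Asubg h ∩ I.Asub := Finset.mem_inter.mpr ⟨hasub h hh, ha⟩
  have hsg' : I.s q' g = sg + δg := by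
    rw [hsgdef]
    simp only [GroupedBandit.s]
    have key : ∑ a' ∈ I.Asubg g ∩ I.Asub, I.Δ g a' * q' g a' * I.J a'
        = ∑ a' ∈ I.Asubg g ∩ I.Asub, (I.Δ g a' * qstar g a' * I.J a'
            + (if a' = a then -δg else 0)) := by
      refine Finset.sum_congr rfl fun a' _ => ?_
      by_cases h1 : a' = a
      · subst h1
        simp only [hq'def, and_self, if_true, hgh, false_and, if_false, add_zero, hδgdef]
        ring
      · simp [hq'def, h1]
    rw [key, Finset.sum_add_distrib,
      Finset.sum_ite_eq' (I.Asubg g ∩ I.Asub) a (fun _ => -δg), if_pos haSg]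
    ring
  have hsh' : I.s q' h = sh - δh := by
    rw [hshdef]
    simp only [GroupedBandit.s]
    have key : ∑ a' ∈ I.Asubg h ∩ I.Asub, I.Δ h a' * q' h a' * I.J a'
        = ∑ a' ∈ I.Asubg h ∩ I.Asub, (I.Δ h a' * qstar h a' * I.J a'
            + (if a' = a then δh else 0)) := by
      refine Finset.sum_congr rfl fun a' _ => ?_
      by_cases h1 : a' = a
      · subst h1
        simp only [hq'def, and_self, if_true, hne_hg, false_and, if_false, add_zero, hδhdef]
        ring
      · simp [hq'def, h1]
    rw [key, Finset.sum_add_distrib,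
      Finset.sum_ite_eq' (I.Asubg h ∩ I.Asub) a (fun _ => δh), if_pos haSh]
    ring
  have hsother : ∀ x, x ≠ g → x ≠ h → I.s q' x = I.s qstar x := by
    intro x hx1 hx2
    have hx : ∀ a', q' x a' = qstar x a' := by
      intro a'
      have e1 : ¬ (x = g ∧ a' = a) := fun hc => hx1 hc.1
      have e2 : ¬ (x = h ∧ a' = a) := fun hc => hx2 hc.1
      simp only [hq'def, if_neg e1, if_neg e2, add_zero]
    simp only [GroupedBandit.s, hx]
  have hδh_lt_sh : δh < sh := by linarith
  have hpos' : ∀ x, 0 < I.s q' x := by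
    intro x
    by_cases hx1 : x = g
    · subst hx1; rw [hsg']; linarith
    by_cases hx2 : x = h
    · subst hx2; rw [hsh']; linarith
    · rw [hsother x hx1 hx2]; exact hspos x
  have hle := hopt q' hfeas' hpos'
  have hzero_out : ∀ x ∈ Finset.univ, x ∉ ({g, h} : Finset G) →
      Real.log (I.s q' x) - Real.log (I.s qstar x) = 0 := by
    intro x _ hx
    simp only [Finset.mem_insert, Finset.mem_singleton, not_or] at hx
    rw [hsother x hx.1 hx.2, sub_self]
  have hdiff : ∑ x, Real.log (I.s q' x) - ∑ x, Real.log (I.s qstar x)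
      = (Real.log (sg + δg) + Real.log (sh - δh)) - (Real.log sg + Real.log sh) := by
    rw [← Finset.sum_sub_distrib,
      ← Finset.sum_subset (Finset.subset_univ ({g, h} : Finset G)) hzero_out,
      Finset.sum_pair hgh, hsg', hsh']
    ring
  have hprod : sg * sh < (sg + δg) * (sh - δh) := by
    have h1 : 0 ≤ (δg - δh) * sg := mul_nonneg (by linarith) hsg.le
    have h2 : 0 < δg * ((sh - sg) - δg - δg) := by
      apply mul_pos hδg_pos
      linarith
    nlinarith
  have hlog : Real.log sg + Real.log sh < Real.log (sg + δg) + Real.log (sh - δh) := by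
    have h1 := Real.log_lt_log (mul_pos hsg hsh) hprod
    rw [Real.log_mul (ne_of_gt hsg) (ne_of_gt hsh),
      Real.log_mul (ne_of_gt (by linarith)) (ne_of_gt (by linarith))] at h1
    exact h1
  linarith
end
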